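/- For the GLL distribution with p = 2, the cdf is F(x;θ,λ) = x^θ·[6 + 2θλ − θ log x·{6 + 2θλ − θ log x·(3 + θλ − θ log x)}]/(6 + 2θλ) for x ∈ (0,1). -/

import Mathlib

/-!
The claimed cdf `F` has the form `x ^ θ * P (log x)` with `P` a cubic satisfying
`θ P + P' = (6 + 2θλ) · θ⁴ L² (λ - L)`, so `F' = f` on `(0, 1)`. Since `x ^ θ` beats every power of
`log x` at `0⁺`, `F` extends continuously by `F 0 = 0`, and as `f ≥ 0` the fundamental theorem of
calculus applies to the (a priori improper) integral over `(0, x)`.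
-/

open Real MeasureTheory

/-- The GLL density with p = 2. -/
noncomputable def ll2 (θ lam x : ℝ) : ℝ :=
  θ ^ 4 / (6 + 2 * lam * θ) * (-Real.log x) ^ 2 * (lam - Real.log x) * x ^ (θ - 1)

open Filter Topology Set

theorem tendsto_rpow_mul_log_pow_nhdsGT_zero {θ : ℝ} (hθ : 0 < θ) (k : ℕ) :
    Tendsto (fun x : ℝ => x ^ θ * log x ^ k) (𝓝[>] 0) (𝓝 0) := by
  rcases k.eq_zero_or_pos with rfl | hk
  · simpa [zero_rpow hθ.ne'] using
      (continuousAt_rpow_const 0 θ (Or.inr hθ.le)).tendsto.mono_left nhdsWithin_le_nhds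
  · have hk' : (k : ℝ) ≠ 0 := by positivity
    have hpow := (tendsto_log_mul_rpow_nhdsGT_zero (r := θ / k) (by positivity)).pow k
    rw [zero_pow hk.ne'] at hpow
    refine hpow.congr' ?_
    filter_upwards [self_mem_nhdsWithin] with x (hx : 0 < x)
    rw [mul_pow, ← rpow_natCast (x ^ (θ / k)), ← rpow_mul hx.le, div_mul_cancel₀ _ hk', mul_comm]

theorem continuousOn_rpow_mul_log_pow {θ : ℝ} (hθ : 0 < θ) (k : ℕ) :
    ContinuousOn (fun x : ℝ => x ^ θ * log x ^ k) (Ici 0) := by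
  intro x hx
  rcases (mem_Ici.mp hx).eq_or_lt with rfl | hx
  · rw [← continuousWithinAt_Ioi_iff_Ici, ContinuousWithinAt, zero_rpow hθ.ne', zero_mul]
    exact tendsto_rpow_mul_log_pow_nhdsGT_zero hθ k
  · exact ((continuousAt_rpow_const x θ (Or.inl hx.ne')).mul
      ((continuousAt_log hx.ne').pow k)).continuousWithinAt

theorem hasDerivAt_rpow_mul_comp_log {P : ℝ → ℝ} {P' θ t : ℝ} (ht : 0 < t)
    (hP : HasDerivAt P P' (log t)) :
    HasDerivAt (fun x => x ^ θ * P (log x)) (t ^ (θ - 1) * (θ * P (log t) + P')) t := by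
  refine ((hasDerivAt_rpow_const (p := θ) (Or.inl ht.ne')).mul
    (hP.comp t (hasDerivAt_log ht.ne'))).congr_deriv ?_
  rw [rpow_sub_one ht.ne', Function.comp_apply]
  field_simp

theorem integral_Ioo_eq_sub_of_hasDerivAt_of_nonneg {f f' : ℝ → ℝ} {a b : ℝ} (hab : a ≤ b)
    (hcont : ContinuousOn f (Icc a b)) (hderiv : ∀ x ∈ Ioo a b, HasDerivAt f (f' x) x)
    (hpos : ∀ x ∈ Ioo a b, 0 ≤ f' x) :
    ∫ x in Ioo a b, f' x = f b - f a := by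
  rw [← integral_Ioc_eq_integral_Ioo, ← intervalIntegral.integral_of_le hab]
  exact intervalIntegral.integral_eq_sub_of_hasDerivAt_of_le hab hcont hderiv
    ((intervalIntegrable_iff_integrableOn_Ioc_of_le hab).mpr
      (intervalIntegral.integrableOn_deriv_of_nonneg hcont hderiv hpos))

noncomputable def ll2Cdf (θ lam x : ℝ) : ℝ :=
  x ^ θ * (6 + 2 * θ * lam - θ * log x *
    (6 + 2 * θ * lam - θ * log x * (3 + θ * lam - θ * log x))) / (6 + 2 * θ * lam)

theorem ll2Cdf_zero {θ : ℝ} (hθ : θ ≠ 0) (lam : ℝ) : ll2Cdf θ lam 0 = 0 := by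
  simp [ll2Cdf, zero_rpow hθ]

theorem hasDerivAt_ll2Cdf (θ lam : ℝ) {t : ℝ} (ht : 0 < t) :
    HasDerivAt (ll2Cdf θ lam) (ll2 θ lam t) t := by
  set c := 6 + 2 * θ * lam
  have hL (L : ℝ) : HasDerivAt (fun L => θ * L) θ L := by
    simpa using (hasDerivAt_id L).const_mul θ
  have hP : HasDerivAt (fun L => c - θ * L * (c - θ * L * (3 + θ * lam - θ * L)))
      (-(θ * c) + 2 * θ ^ 2 * (3 + θ * lam) * log t - 3 * θ ^ 3 * log t ^ 2) (log t) :=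
    ((hasDerivAt_const _ c).sub ((hL _).mul ((hasDerivAt_const _ c).sub
      ((hL _).mul ((hasDerivAt_const _ (3 + θ * lam)).sub (hL _)))))).congr_deriv (by
        simp only [Pi.sub_apply, Pi.mul_apply]
        ring)
  refine ((hasDerivAt_rpow_mul_comp_log (θ := θ) ht hP).div_const c).congr_deriv ?_
  simp only [ll2, c]
  ring

theorem continuousOn_ll2Cdf {θ : ℝ} (hθ : 0 < θ) (lam : ℝ) :
    ContinuousOn (ll2Cdf θ lam) (Ici 0) := by
  have hexpand : ll2Cdf θ lam = fun x => ((6 + 2 * θ * lam) * (x ^ θ * log x ^ 0)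
      - θ * (6 + 2 * θ * lam) * (x ^ θ * log x ^ 1) + θ ^ 2 * (3 + θ * lam) * (x ^ θ * log x ^ 2)
      - θ ^ 3 * (x ^ θ * log x ^ 3)) / (6 + 2 * θ * lam) := by
    ext x
    simp only [ll2Cdf]
    ring
  have hpow := fun k => continuousOn_rpow_mul_log_pow hθ k
  rw [hexpand]
  fun_prop

theorem ll2_nonneg {θ lam t : ℝ} (hθ : 0 ≤ θ) (hlam : 0 ≤ lam) (ht0 : 0 < t) (ht1 : t ≤ 1) :
    0 ≤ ll2 θ lam t := by
  have hlog : log t ≤ 0 := log_nonpos ht0.le ht1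
  have hlam_sub : 0 ≤ lam - log t := by linarith
  have := rpow_pos_of_pos ht0 (θ - 1)
  unfold ll2
  positivity

theorem ll2_cdf (θ lam : ℝ) (hθ : 0 < θ) (hlam : 0 ≤ lam) (x : ℝ) (hx : x ∈ Set.Ioo (0:ℝ) 1) :
    ∫ t in Set.Ioo (0:ℝ) x, ll2 θ lam t =
      x ^ θ * (6 + 2 * θ * lam - θ * Real.log x *
        (6 + 2 * θ * lam - θ * Real.log x * (3 + θ * lam - θ * Real.log x))) / (6 + 2 * θ * lam) := by
  obtain ⟨hx0, hx1⟩ := hx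
  rw [integral_Ioo_eq_sub_of_hasDerivAt_of_nonneg hx0.le
    ((continuousOn_ll2Cdf hθ lam).mono Icc_subset_Ici_self)
    (fun t ht => hasDerivAt_ll2Cdf θ lam ht.1)
    (fun t ht => ll2_nonneg hθ.le hlam ht.1 (ht.2.trans hx1).le),
    ll2Cdf_zero hθ.ne', sub_zero, ll2Cdf]
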